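/- arXiv:1808.05358 — 7 statements merged into one kernel-verified Lean document; each statement's English description precedes it below -/
import Mathlib

section
/- Let 0 < α < 1 be a real number and let n, m be nonzero integers with |n| ≠ |m|. Then | |n|^α − |m|^α | ≥ α/(2·|m|^{1−α}). -/
open Real

lemma aux_concave (α : ℝ) (hα0 : 0 < α) (hα1 : α ≤ 1) {x y : ℝ} (hx : 0 < x) (hy : 0 ≤ y)
    (hxy : y ≤ x) : α * x ^ (α - 1) * (x - y) ≤ x ^ α - y ^ α := by
  have hs : (-1 : ℝ) ≤ y / x - 1 := by
    have : 0 ≤ y / x := div_nonneg hy hx.le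
    linarith
  have h := rpow_one_add_le_one_add_mul_self hs hα0.le hα1
  rw [show 1 + (y / x - 1) = y / x by ring] at h
  have hdiv : (y / x) ^ α = y ^ α / x ^ α := Real.div_rpow hy hx.le α
  rw [hdiv] at h
  have hxα : (0 : ℝ) < x ^ α := rpow_pos_of_pos hx α
  have hx1 : x ^ (α - 1) = x ^ α / x := by
    rw [Real.rpow_sub hx, Real.rpow_one]
  have h2 : y ^ α ≤ x ^ α * (1 + α * (y / x - 1)) := by
    calc y ^ α = (y ^ α / x ^ α) * x ^ α := by field_simp
    _ ≤ (1 + α * (y / x - 1)) * x ^ α := mul_le_mul_of_nonneg_right h hxα.le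
    _ = x ^ α * (1 + α * (y / x - 1)) := by ring
  have hxne : x ≠ 0 := hx.ne'
  rw [hx1]
  have heq : x ^ α * (1 + α * (y / x - 1)) = x ^ α + α * (x ^ α / x) * (y - x) := by
    field_simp
  rw [heq] at h2
  linarith

theorem stmt_1 (α : ℝ) (hα0 : 0 < α) (hα1 : α < 1) (n m : ℤ) (hn : n ≠ 0) (hm : m ≠ 0)
    (hnm : |n| ≠ |m|) :
    |(|n| : ℝ) ^ α - (|m| : ℝ) ^ α| ≥ α / (2 * (|m| : ℝ) ^ (1 - α)) := by
  set a : ℝ := (|n| : ℝ) with ha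
  set b : ℝ := (|m| : ℝ) with hb
  have ha1 : (1 : ℝ) ≤ a := by
    have h1 : (1 : ℤ) ≤ |n| := Int.one_le_abs hn
    have h2 : ((1 : ℤ) : ℝ) ≤ ((|n| : ℤ) : ℝ) := Int.cast_le.mpr h1
    rw [ha]; push_cast at h2; exact h2
  have hb1 : (1 : ℝ) ≤ b := by
    have h1 : (1 : ℤ) ≤ |m| := Int.one_le_abs hm
    have h2 : ((1 : ℤ) : ℝ) ≤ ((|m| : ℤ) : ℝ) := Int.cast_le.mpr h1
    rw [hb]; push_cast at h2; exact h2
  have hbpos : (0 : ℝ) < b := lt_of_lt_of_le one_pos hb1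
  have hb1α : (0 : ℝ) < b ^ (1 - α) := rpow_pos_of_pos hbpos _
  have hkey : b ^ (α - 1) = (b ^ (1 - α))⁻¹ := by
    rw [← Real.rpow_neg hbpos.le]; ring_nf
  rcases lt_or_gt_of_ne hnm with h | h
  · -- |n| < |m|, a ≤ b - 1
    have hab : a ≤ b - 1 := by
      have h' : |n| + 1 ≤ |m| := h
      have h'' : ((|n| + 1 : ℤ) : ℝ) ≤ ((|m| : ℤ) : ℝ) := Int.cast_le.mpr h'
      push_cast at h''; rw [ha, hb]; linarith
    have h1 : α * b ^ (α - 1) * (b - (b - 1)) ≤ b ^ α - (b - 1) ^ α :=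
      aux_concave α hα0 hα1.le hbpos (by linarith) (by linarith)
    have h2 : a ^ α ≤ (b - 1) ^ α :=
      Real.rpow_le_rpow (by linarith) hab hα0.le
    have h3 : α * b ^ (α - 1) ≤ b ^ α - a ^ α := by
      have hh : b - (b - 1) = 1 := by ring
      rw [hh, mul_one] at h1; linarith
    have hbα1 : (0 : ℝ) < b ^ (α - 1) := rpow_pos_of_pos hbpos _
    have habs : |a ^ α - b ^ α| = b ^ α - a ^ α := by
      rw [abs_sub_comm, abs_of_nonneg]
      nlinarith [mul_pos hα0 hbα1]
    rw [habs, ge_iff_le, div_le_iff₀ (by positivity)]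
    rw [hkey] at h3
    nlinarith [mul_inv_cancel₀ hb1α.ne', mul_le_mul_of_nonneg_right h3 hb1α.le]
  · -- |m| < |n|, b + 1 ≤ a
    have hab : b + 1 ≤ a := by
      have h' : |m| + 1 ≤ |n| := h
      have h'' : ((|m| + 1 : ℤ) : ℝ) ≤ ((|n| : ℤ) : ℝ) := Int.cast_le.mpr h'
      push_cast at h''; rw [ha, hb]; linarith
    have h1 : α * (b + 1) ^ (α - 1) * ((b + 1) - b) ≤ (b + 1) ^ α - b ^ α :=
      aux_concave α hα0 hα1.le (by linarith) hbpos.le (by linarith)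
    have h2 : (b + 1) ^ α ≤ a ^ α :=
      Real.rpow_le_rpow (by linarith) hab hα0.le
    have h5 : (2 * b) ^ (α - 1) ≤ (b + 1) ^ (α - 1) :=
      Real.rpow_le_rpow_of_nonpos (by linarith) (by linarith) (by linarith)
    have h6 : (2 * b) ^ (α - 1) = 2 ^ (α - 1) * b ^ (α - 1) := by
      rw [Real.mul_rpow (by norm_num) hbpos.le]
    have h7 : (2 : ℝ) ^ (-1 : ℝ) ≤ 2 ^ (α - 1) :=
      Real.rpow_le_rpow_of_exponent_le (by norm_num) (by linarith)
    have h8 : (2 : ℝ) ^ (-1 : ℝ) = 1 / 2 := by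
      rw [Real.rpow_neg_one]; norm_num
    have hbα1 : (0 : ℝ) < b ^ (α - 1) := rpow_pos_of_pos hbpos _
    have h9 : b ^ (α - 1) / 2 ≤ (b + 1) ^ (α - 1) := by
      rw [h6] at h5
      have hmul := mul_le_mul_of_nonneg_right h7 hbα1.le
      rw [h8] at hmul
      linarith
    have h10 : α * (b ^ (α - 1) / 2) ≤ a ^ α - b ^ α := by
      have hh : α * (b + 1) ^ (α - 1) ≤ (b + 1) ^ α - b ^ α := by
        have heq : (b + 1) - b = 1 := by ring
        rw [heq, mul_one] at h1; exact h1
      nlinarith [mul_le_mul_of_nonneg_left h9 hα0.le]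
    have habs : |a ^ α - b ^ α| = a ^ α - b ^ α := by
      rw [abs_of_nonneg]
      have := Real.rpow_le_rpow hbpos.le (by linarith : b ≤ a) hα0.le
      linarith
    rw [habs, ge_iff_le, div_le_iff₀ (by positivity)]
    rw [hkey] at h10
    nlinarith [mul_inv_cancel₀ hb1α.ne', mul_le_mul_of_nonneg_right h10 hb1α.le]
end

section
/- Let 0 < α < 1 and β > 0 be real numbers with α + β ≥ 1, and let n, m be nonzero integers with |n| ≠ |m|. Then 1/(|n|^β · |m|^β · | |n|^α − |m|^α |) ≤ (2/α) · |n|^{−β}. -/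
open Real

-- Bernoulli: for x > 0, 0 ≤ α ≤ 1: x^α ≤ 1 + α*(x-1)
private lemma bern {x α : ℝ} (hx : 0 < x) (h0 : 0 ≤ α) (h1 : α ≤ 1) :
    x ^ α ≤ 1 + α * (x - 1) := by
  have := rpow_one_add_le_one_add_mul_self (s := x - 1) (by linarith) h0 h1
  simpa using this

-- MVT-style: for 0 < b ≤ a, 0 < α ≤ 1: α * a^(α-1) * (a-b) ≤ a^α - b^α
private lemma mvt {a b α : ℝ} (hb : 0 < b) (hba : b ≤ a) (h0 : 0 < α) (h1 : α ≤ 1) :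
    α * a ^ (α - 1) * (a - b) ≤ a ^ α - b ^ α := by
  have ha : 0 < a := lt_of_lt_of_le hb hba
  have hx : (0:ℝ) < b / a := div_pos hb ha
  have hB : (b / a) ^ α ≤ 1 + α * (b / a - 1) := bern hx h0.le h1
  have key : b ^ α ≤ a ^ α + α * a ^ (α - 1) * (b - a) := by
    have h1' : b ^ α = a ^ α * (b / a) ^ α := by
      rw [← Real.mul_rpow ha.le (by positivity)]
      rw [mul_div_cancel₀ _ (ne_of_gt ha)]
    have h2' : a ^ α * (1 + α * (b / a - 1)) = a ^ α + α * a ^ (α - 1) * (b - a) := by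
      have : a ^ (α - 1) = a ^ α / a := by
        rw [Real.rpow_sub ha, Real.rpow_one]
      rw [this]; field_simp
    calc b ^ α = a ^ α * (b / a) ^ α := h1'
      _ ≤ a ^ α * (1 + α * (b / a - 1)) := by
          exact mul_le_mul_of_nonneg_left hB (by positivity)
      _ = a ^ α + α * a ^ (α - 1) * (b - a) := h2'
  nlinarith [key]

-- convexity chord: 2^(-α) ≤ 1 - α/2 for 0 ≤ α ≤ 1
private lemma two_pow_neg {α : ℝ} (h0 : 0 ≤ α) (h1 : α ≤ 1) :
    (2:ℝ) ^ (-α) ≤ 1 - α / 2 := by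
  have := bern (x := (1:ℝ)/2) (by norm_num) h0 h1
  have h2 : ((1:ℝ)/2) ^ α = (2:ℝ) ^ (-α) := by
    rw [Real.rpow_neg (by norm_num : (0:ℝ) ≤ 2), one_div, Real.inv_rpow (by norm_num)]
  rw [h2] at this
  nlinarith

-- key lemma: b^β * |a^α - b^α| ≥ α/2
private lemma key {α β a b : ℝ} (hα0 : 0 < α) (hα1 : α < 1) (hβ : 0 < β)
    (hαβ : 1 ≤ α + β) (ha : 1 ≤ a) (hb : 1 ≤ b) (hab : 1 ≤ |a - b|) :
    α / 2 ≤ b ^ β * |a ^ α - b ^ α| := by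
  have ha0 : (0:ℝ) < a := lt_of_lt_of_le one_pos ha
  have hb0 : (0:ℝ) < b := lt_of_lt_of_le one_pos hb
  rcases le_or_gt a b with hle | hgt
  · -- b ≥ a + 1 : b^β(b^α - a^α) ≥ α b^{α+β-1}(b-a) ≥ α
    have hba : a + 1 ≤ b := by
      rw [abs_sub_comm, abs_of_nonneg (by linarith)] at hab; linarith
    have h1 : α * b ^ (α - 1) * (b - a) ≤ b ^ α - a ^ α :=
      mvt ha0 (by linarith) hα0 hα1.le
    have habs : |a ^ α - b ^ α| = b ^ α - a ^ α := by
      rw [abs_sub_comm, abs_of_nonneg]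
      have := Real.rpow_le_rpow ha0.le (by linarith : a ≤ b) hα0.le
      linarith
    rw [habs]
    have h2 : b ^ β * (α * b ^ (α - 1) * (b - a)) ≤ b ^ β * (b ^ α - a ^ α) :=
      mul_le_mul_of_nonneg_left h1 (by positivity)
    have h3 : b ^ β * b ^ (α - 1) = b ^ (β + (α - 1)) := (Real.rpow_add hb0 _ _).symm
    have h4 : (1:ℝ) ≤ b ^ (β + (α - 1)) :=
      Real.one_le_rpow hb (by linarith)
    have hBQ : (1:ℝ) ≤ b ^ (β + (α - 1)) * (b - a) := by nlinarith
    have h5 : α ≤ α * b ^ (β + (α - 1)) * (b - a) := by nlinarith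
    calc α / 2 ≤ α := by linarith
      _ ≤ α * b ^ (β + (α - 1)) * (b - a) := h5
      _ = b ^ β * (α * b ^ (α - 1) * (b - a)) := by rw [← h3]; ring
      _ ≤ b ^ β * (b ^ α - a ^ α) := h2
  · -- a > b
    have hba : b + 1 ≤ a := by
      rw [abs_of_nonneg (by linarith)] at hab; linarith
    have habs : |a ^ α - b ^ α| = a ^ α - b ^ α := by
      rw [abs_of_nonneg]
      have := Real.rpow_le_rpow hb0.le hgt.le hα0.le
      linarith
    rw [habs]
    rcases le_or_gt (a / 2) b with h2b | h2b
    · -- b ≥ a/2 : b^β(a^α-b^α) ≥ α (b/a)^{1-α}(a-b) ≥ α (1/2)^{1-α} ≥ α/2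
      have h1 : α * a ^ (α - 1) * (a - b) ≤ a ^ α - b ^ α :=
        mvt hb0 hgt.le hα0 hα1.le
      have hbb : b ^ (1 - α) ≤ b ^ β :=
        Real.rpow_le_rpow_of_exponent_le hb (by linarith)
      have hchain : α / 2 ≤ b ^ (1 - α) * (α * a ^ (α - 1) * (a - b)) := by
        have e1 : b ^ (1 - α) * a ^ (α - 1) = (b / a) ^ (1 - α) := by
          rw [Real.div_rpow hb0.le ha0.le]
          rw [show α - 1 = -(1 - α) by ring, Real.rpow_neg ha0.le]
          rw [div_eq_mul_inv]
        have e2 : ((1:ℝ)/2) ^ (1 - α) ≤ (b / a) ^ (1 - α) := by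
          apply Real.rpow_le_rpow (by norm_num) _ (by linarith)
          rw [div_le_div_iff₀ (by norm_num) ha0]; linarith
        have e3 : (1:ℝ)/2 ≤ ((1:ℝ)/2) ^ (1 - α) := by
          calc (1:ℝ)/2 = ((1:ℝ)/2) ^ (1:ℝ) := by rw [Real.rpow_one]
            _ ≤ ((1:ℝ)/2) ^ (1 - α) := by
                apply Real.rpow_le_rpow_of_exponent_ge (by norm_num) (by norm_num)
                linarith
        have e4 : (1:ℝ)/2 ≤ b ^ (1 - α) * a ^ (α - 1) := by rw [e1]; linarith
        have e5 : 1 ≤ a - b := by linarith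
        have hPQ : 1/2 ≤ b ^ (1 - α) * a ^ (α - 1) * (a - b) := by nlinarith
        have : b ^ (1 - α) * (α * a ^ (α - 1) * (a - b))
            = α * (b ^ (1 - α) * a ^ (α - 1) * (a - b)) := by ring
        rw [this]; nlinarith
      calc α / 2 ≤ b ^ (1 - α) * (α * a ^ (α - 1) * (a - b)) := hchain
        _ ≤ b ^ β * (α * a ^ (α - 1) * (a - b)) := by
            apply mul_le_mul_of_nonneg_right hbb
            have h6 := Real.rpow_pos_of_pos ha0 (α - 1)
            have : (0:ℝ) < a - b := by linarith
            positivity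
        _ ≤ b ^ β * (a ^ α - b ^ α) :=
            mul_le_mul_of_nonneg_left h1 (by positivity)
    · -- b < a/2 : a^α - b^α ≥ a^α(1 - 2^{-α}) ≥ α/2
      have hb2 : b ^ α ≤ (a / 2) ^ α :=
        Real.rpow_le_rpow hb0.le h2b.le hα0.le
      have ha2 : (a / 2) ^ α = a ^ α * 2 ^ (-α) := by
        rw [div_eq_mul_inv, Real.mul_rpow ha0.le (by norm_num), ← Real.rpow_neg_one,
          ← Real.rpow_mul (by norm_num : (0:ℝ) ≤ 2)]
        norm_num
      have hpa : (1:ℝ) ≤ a ^ α := Real.one_le_rpow ha hα0.le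
      have hpb : (1:ℝ) ≤ b ^ β := Real.one_le_rpow hb hβ.le
      have h2p : (2:ℝ) ^ (-α) ≤ 1 - α / 2 := two_pow_neg hα0.le hα1.le
      have hd : α / 2 ≤ a ^ α - b ^ α := by
        have : a ^ α * (2:ℝ) ^ (-α) ≤ a ^ α * (1 - α / 2) :=
          mul_le_mul_of_nonneg_left h2p (by positivity)
        nlinarith
      nlinarith

theorem stmt_2 (α β : ℝ) (hα0 : 0 < α) (hα1 : α < 1) (hβ : 0 < β) (hαβ : 1 ≤ α + β)
    (n m : ℤ) (hn : n ≠ 0) (hm : m ≠ 0) (hnm : |n| ≠ |m|) :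
    1 / ((|n| : ℝ) ^ β * (|m| : ℝ) ^ β * |(|n| : ℝ) ^ α - (|m| : ℝ) ^ α|)
      ≤ (2 / α) * (|n| : ℝ) ^ (-β) := by
  set a : ℝ := (|n| : ℝ) with ha_def
  set b : ℝ := (|m| : ℝ) with hb_def
  have ha : (1:ℝ) ≤ a := by
    have h1 : (1:ℤ) ≤ |n| := Int.one_le_abs hn
    rw [ha_def, ← Int.cast_abs]
    exact_mod_cast h1
  have hb : (1:ℝ) ≤ b := by
    have h1 : (1:ℤ) ≤ |m| := Int.one_le_abs hm
    rw [hb_def, ← Int.cast_abs]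
    exact_mod_cast h1
  have hab : (1:ℝ) ≤ |a - b| := by
    have h1 : |n| - |m| ≠ 0 := sub_ne_zero.mpr hnm
    have h2 : (1:ℤ) ≤ |(|n| - |m|)| := Int.one_le_abs h1
    have h3 : (((|(|n| - |m|)| : ℤ)) : ℝ) = |a - b| := by
      rw [ha_def, hb_def]; push_cast; ring_nf
    rw [← h3]; exact_mod_cast h2
  have hk := key hα0 hα1 hβ hαβ ha hb hab
  have ha0 : (0:ℝ) < a := lt_of_lt_of_le one_pos ha
  have hb0 : (0:ℝ) < b := lt_of_lt_of_le one_pos hb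
  have hD : 0 < |a ^ α - b ^ α| := by
    rw [abs_pos, sub_ne_zero]
    intro h
    rcases lt_trichotomy a b with hlt | heq | hgt
    · exact absurd h (ne_of_lt (Real.rpow_lt_rpow ha0.le hlt hα0))
    · rw [heq] at hab; simp at hab; linarith
    · exact absurd h (ne_of_gt (Real.rpow_lt_rpow hb0.le hgt hα0))
  have hpa : (0:ℝ) < a ^ β := Real.rpow_pos_of_pos ha0 β
  have hpb : (0:ℝ) < b ^ β := Real.rpow_pos_of_pos hb0 β
  have hkpos : (0:ℝ) < b ^ β * |a ^ α - b ^ α| := mul_pos hpb hD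
  have hneg : a ^ (-β) = (a ^ β)⁻¹ := Real.rpow_neg ha0.le β
  rw [hneg]
  have step : 1 / (b ^ β * |a ^ α - b ^ α|) ≤ 2 / α := by
    rw [div_le_div_iff₀ hkpos hα0]
    nlinarith
  calc 1 / (a ^ β * b ^ β * |a ^ α - b ^ α|)
      = (1 / (b ^ β * |a ^ α - b ^ α|)) * (a ^ β)⁻¹ := by
        field_simp
    _ ≤ (2 / α) * (a ^ β)⁻¹ := by
        apply mul_le_mul_of_nonneg_right step (by positivity)
end

section
/- Let 0 < α < 1 and β > 0 be real numbers with α + β ≥ 1, let K ≥ 1 be a real number, and let n, m be nonzero integers with |n| ≠ |m| and |n − m| ≤ K. Then 1/(( |n|^α − |m|^α )² · |n|^{2β}) ≤ 16·K²/α². -/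
set_option maxHeartbeats 1000000

open Real Set

lemma aux_mvt (α : ℝ) (hα0 : 0 < α) (hα1 : α ≤ 1) (a b : ℝ) (ha : 1 ≤ a) (hab : a < b) :
    α * b ^ (α - 1) * (b - a) ≤ b ^ α - a ^ α := by
  have ha0 : (0:ℝ) < a := lt_of_lt_of_le one_pos ha
  obtain ⟨c, hc, heq⟩ := exists_hasDerivAt_eq_slope (fun x => x ^ α)
      (fun x => α * x ^ (α - 1)) hab
      (ContinuousOn.rpow_const continuousOn_id fun x hx =>
        Or.inl (ne_of_gt (lt_of_lt_of_le ha0 hx.1)))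
      (fun x hx => Real.hasDerivAt_rpow_const (Or.inl (ne_of_gt (lt_trans ha0 hx.1))))
  have hbc : c ≤ b := le_of_lt hc.2
  have h1 : b ^ (α - 1) ≤ c ^ (α - 1) :=
    Real.rpow_le_rpow_of_nonpos (lt_trans ha0 hc.1) hbc (by linarith)
  have h2 : α * c ^ (α - 1) = (b ^ α - a ^ α) / (b - a) := heq
  have hba : 0 < b - a := by linarith
  have : α * b ^ (α - 1) ≤ (b ^ α - a ^ α) / (b - a) := by
    rw [← h2]
    exact mul_le_mul_of_nonneg_left h1 hα0.le
  calc α * b ^ (α - 1) * (b - a) ≤ ((b ^ α - a ^ α) / (b - a)) * (b - a) :=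
        mul_le_mul_of_nonneg_right this hba.le
    _ = b ^ α - a ^ α := div_mul_cancel₀ _ (ne_of_gt hba)

theorem stmt_3 (α β K : ℝ) (hα0 : 0 < α) (hα1 : α < 1) (hβ : 0 < β) (hαβ : 1 ≤ α + β)
    (hK : 1 ≤ K) (n m : ℤ) (hn : n ≠ 0) (hm : m ≠ 0) (hnm : |n| ≠ |m|)
    (hdist : (|n - m| : ℝ) ≤ K) :
    1 / (((|n| : ℝ) ^ α - (|m| : ℝ) ^ α) ^ 2 * (|n| : ℝ) ^ (2 * β))
      ≤ 16 * K ^ 2 / α ^ 2 := by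
  set N : ℝ := (|n| : ℝ) with hN
  set M : ℝ := (|m| : ℝ) with hM
  have hN1 : 1 ≤ N := by
    rw [hN, ← Int.cast_abs]; exact_mod_cast Int.one_le_abs hn
  have hM1 : 1 ≤ M := by
    rw [hM, ← Int.cast_abs]; exact_mod_cast Int.one_le_abs hm
  have hN0 : 0 < N := lt_of_lt_of_le one_pos hN1
  have hNM : N ≠ M := by
    rw [hN, hM, ← Int.cast_abs, ← Int.cast_abs]
    exact_mod_cast hnm
  -- |N - M| ≥ 1 and ≤ K
  have habs : |N - M| ≤ K := by
    have h1 : |(|n| - |m| : ℤ)| ≤ |n - m| := abs_abs_sub_abs_le_abs_sub n m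
    have : (|(|n| - |m| : ℤ)| : ℝ) ≤ K := le_trans (by exact_mod_cast h1) hdist
    simpa [hN, hM, ← Int.cast_abs] using this
  have hge1 : (1:ℝ) ≤ |N - M| := by
    have : |n| - |m| ≠ 0 := sub_ne_zero.mpr hnm
    have h1 : (1:ℤ) ≤ |(|n| - |m|)| := Int.one_le_abs this
    have : (1:ℝ) ≤ (|(|n| - |m| : ℤ)| : ℝ) := by exact_mod_cast h1
    simpa [hN, hM, ← Int.cast_abs] using this
  -- key lower bound on the product
  have key : α ^ 2 / (16 * K ^ 2) ≤ (N ^ α - M ^ α) ^ 2 * N ^ (2 * β) := by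
    have hKpos : (0:ℝ) < K := lt_of_lt_of_le one_pos hK
    rcases lt_or_gt_of_ne hNM with h | h
    · -- N < M, max = M ≤ N + K ≤ 2KN
      have hmvt := aux_mvt α hα0 hα1.le N M hN1 h
      have hMle : M ≤ 2 * K * N := by
        have : M - N ≤ K := by
          have := habs; rw [abs_sub_comm] at this
          calc M - N ≤ |M - N| := le_abs_self _
            _ ≤ K := this
        nlinarith
      have hMpow : (2 * K * N) ^ (α - 1) ≤ M ^ (α - 1) :=
        Real.rpow_le_rpow_of_nonpos (lt_of_lt_of_le one_pos hM1) hMle (by linarith)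
      have hsplit : (2 * K * N) ^ (α - 1) = (2*K) ^ (α - 1) * N ^ (α - 1) :=
        Real.mul_rpow (by positivity) hN0.le
      have h2K : (2*K)⁻¹ ≤ (2*K) ^ (α - 1) := by
        rw [← Real.rpow_neg_one]
        exact Real.rpow_le_rpow_of_exponent_le (by linarith) (by linarith)
      have hlow : α * ((2*K)⁻¹ * N ^ (α - 1)) * (M - N) ≤ M ^ α - N ^ α := by
        refine le_trans ?_ hmvt
        have hd : 0 ≤ M - N := by linarith
        have : (2*K)⁻¹ * N ^ (α - 1) ≤ M ^ (α - 1) := by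
          rw [hsplit] at hMpow
          refine le_trans (mul_le_mul_of_nonneg_right h2K (by positivity)) hMpow
        exact mul_le_mul_of_nonneg_right (mul_le_mul_of_nonneg_left this hα0.le) hd
      have hd1 : 1 ≤ M - N := by
        have := hge1; rw [abs_sub_comm, abs_of_nonneg (by linarith : (0:ℝ) ≤ M - N)] at this
        linarith
      -- M^α - N^α ≥ α/(2K) * N^(α-1)
      have hδ : α / (2*K) * N ^ (α - 1) ≤ M ^ α - N ^ α := by
        refine le_trans ?_ hlow
        have hp : 0 < N ^ (α - 1) := Real.rpow_pos_of_pos hN0 _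
        have : α / (2*K) * N ^ (α - 1) = α * ((2*K)⁻¹ * N ^ (α - 1)) * 1 := by ring
        rw [this]
        have hpos : 0 ≤ α * ((2*K)⁻¹ * N ^ (α - 1)) := by positivity
        nlinarith
      -- square it
      have hδ0 : 0 ≤ α / (2*K) * N ^ (α - 1) := by positivity
      have hsq : (α / (2*K) * N ^ (α - 1))^2 ≤ (N ^ α - M ^ α)^2 := by
        have h1 : (α / (2*K) * N ^ (α - 1))^2 ≤ (M ^ α - N ^ α)^2 := by
          apply sq_le_sq' <;> nlinarith
        rw [show (N ^ α - M ^ α)^2 = (M ^ α - N ^ α)^2 by ring]; exact h1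
      have hcomb : (α / (2*K))^2 * N ^ (2*(α-1)) * N ^ (2*β)
          ≤ (N ^ α - M ^ α) ^ 2 * N ^ (2 * β) := by
        refine mul_le_mul_of_nonneg_right ?_ (by positivity)
        calc (α / (2*K))^2 * N ^ (2*(α-1)) = (α / (2*K) * N ^ (α-1))^2 := by
              rw [mul_pow, ← Real.rpow_natCast (N ^ (α-1)) 2, ← Real.rpow_mul hN0.le]
              norm_num [mul_comm]
          _ ≤ _ := hsq
      refine le_trans ?_ hcomb
      rw [mul_assoc, ← Real.rpow_add hN0]
      have hexp : 1 ≤ N ^ (2*(α-1) + 2*β) := by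
        have := Real.rpow_le_rpow_of_exponent_le hN1 (by linarith : (0:ℝ) ≤ 2*(α-1) + 2*β)
        rwa [Real.rpow_zero] at this
      calc α^2 / (16 * K^2) ≤ α^2 / (4 * K^2) * 1 := by
            rw [mul_one, div_le_div_iff₀ (by positivity) (by positivity)]
            nlinarith [mul_nonneg (sq_nonneg α) (sq_nonneg K)]
        _ ≤ α^2 / (4 * K^2) * N ^ (2*(α-1) + 2*β) :=
            mul_le_mul_of_nonneg_left hexp (by positivity)
        _ = (α / (2*K))^2 * N ^ (2*(α-1) + 2*β) := by
            rw [div_pow]; congr 2; ring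
    · -- M < N, max = N
      have hmvt := aux_mvt α hα0 hα1.le M N hM1 h
      have hd1 : 1 ≤ N - M := by
        have := hge1; rw [abs_of_nonneg (by linarith : (0:ℝ) ≤ N - M)] at this
        linarith
      have hδ : α * N ^ (α - 1) ≤ N ^ α - M ^ α := by
        refine le_trans ?_ hmvt
        have hp : 0 < N ^ (α - 1) := Real.rpow_pos_of_pos hN0 _
        nlinarith [mul_pos hα0 hp]
      have hδ0 : 0 ≤ α * N ^ (α - 1) := by positivity
      have hsq : (α * N ^ (α - 1))^2 ≤ (N ^ α - M ^ α)^2 := by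
        apply sq_le_sq' <;> nlinarith
      have hcomb : α^2 * N ^ (2*(α-1)) * N ^ (2*β)
          ≤ (N ^ α - M ^ α) ^ 2 * N ^ (2 * β) := by
        refine mul_le_mul_of_nonneg_right ?_ (by positivity)
        calc α^2 * N ^ (2*(α-1)) = (α * N ^ (α-1))^2 := by
              rw [mul_pow, ← Real.rpow_natCast (N ^ (α-1)) 2, ← Real.rpow_mul hN0.le]
              norm_num [mul_comm]
          _ ≤ _ := hsq
      refine le_trans ?_ hcomb
      rw [mul_assoc, ← Real.rpow_add hN0]
      have hexp : 1 ≤ N ^ (2*(α-1) + 2*β) := by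
        have := Real.rpow_le_rpow_of_exponent_le hN1 (by linarith : (0:ℝ) ≤ 2*(α-1) + 2*β)
        rwa [Real.rpow_zero] at this
      calc α^2 / (16 * K^2) ≤ α^2 * 1 := by
            rw [mul_one, div_le_iff₀ (by positivity)]
            nlinarith [mul_nonneg (sq_nonneg α) (by nlinarith : (0:ℝ) ≤ 16 * K^2 - 1)]
        _ ≤ α^2 * N ^ (2*(α-1) + 2*β) :=
            mul_le_mul_of_nonneg_left hexp (sq_nonneg α)
  -- conclude
  have hpos : 0 < (N ^ α - M ^ α) ^ 2 * N ^ (2 * β) :=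
    lt_of_lt_of_le (by positivity) key
  rw [div_le_div_iff₀ hpos (by positivity)]
  calc 1 * α^2 = (α^2 / (16 * K^2)) * (16 * K^2) := by
        field_simp
    _ ≤ ((N ^ α - M ^ α) ^ 2 * N ^ (2 * β)) * (16 * K^2) :=
        mul_le_mul_of_nonneg_right key (by positivity)
    _ = 16 * K^2 * ((N ^ α - M ^ α) ^ 2 * N ^ (2 * β)) := by ring
end

section
/- Let d ≥ 1 be an integer, let 0 < α < 1, λ ∈ ℝ, γ > 0, K ≥ 1, τ > 0 be real numbers, let ω ∈ ℝ^d and k ∈ ℤ^d satisfy |⟨k, ω⟩| ≥ γ/K^τ, and let n, m be nonzero integers with |n − m| ≤ K and min(|n|, |m|)^{1−α} ≥ 4·K^{τ+1}/γ. Let Ω̃_n and Ω̃_m be real numbers with |Ω̃_n| ≤ γ/(8K^τ) and |Ω̃_m| ≤ γ/(8K^τ), and set Ω_j = |j|^α + λ + Ω̃_j for j ∈ {n, m}. Then |⟨k, ω⟩ + (Ω_n − Ω_m)| ≥ γ/(2K^τ) and |⟨k, ω⟩ − (Ω_n − Ω_m)| ≥ γ/(2K^τ). -/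
open Real

lemma rpow_sub_rpow_le_aux {α : ℝ} (hα0 : 0 < α) (hα1 : α < 1) {a b : ℝ}
    (ha : 1 ≤ a) (hab : a ≤ b) : b ^ α - a ^ α ≤ (b - a) * a ^ (α - 1) := by
  rcases eq_or_lt_of_le hab with rfl | hlt
  · simp
  have ha0 : (0:ℝ) < a := lt_of_lt_of_le one_pos ha
  obtain ⟨c, hc, hceq⟩ := exists_hasDerivAt_eq_slope (fun x => x ^ α)
      (fun x => α * x ^ (α - 1)) hlt
      (ContinuousOn.rpow_const continuousOn_id (fun x hx => Or.inl (by
        have : (0:ℝ) < x := lt_of_lt_of_le ha0 hx.1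
        exact ne_of_gt this)))
      (fun x hx => Real.hasDerivAt_rpow_const (Or.inl (ne_of_gt (lt_trans ha0 hx.1))))
  have hc0 : 0 < c := lt_trans ha0 hc.1
  have hbound : α * c ^ (α - 1) ≤ a ^ (α - 1) := by
    calc α * c ^ (α - 1) ≤ 1 * c ^ (α - 1) := by
          apply mul_le_mul_of_nonneg_right hα1.le (rpow_nonneg hc0.le _)
      _ = c ^ (α - 1) := one_mul _
      _ ≤ a ^ (α - 1) := Real.rpow_le_rpow_of_nonpos ha0 hc.1.le (by linarith)
  have := hceq
  have hslope : (b ^ α - a ^ α) / (b - a) ≤ a ^ (α - 1) := by rw [← this]; exact hbound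
  have hba : 0 < b - a := by linarith
  calc b ^ α - a ^ α = (b ^ α - a ^ α) / (b - a) * (b - a) := by field_simp
    _ ≤ a ^ (α - 1) * (b - a) := mul_le_mul_of_nonneg_right hslope hba.le
    _ = (b - a) * a ^ (α - 1) := mul_comm _ _

theorem stmt_4 (d : ℕ) (hd : 1 ≤ d) (α lam γ K τ : ℝ)
    (hα0 : 0 < α) (hα1 : α < 1) (hγ : 0 < γ) (hK : 1 ≤ K) (hτ : 0 < τ)
    (ω : Fin d → ℝ) (k : Fin d → ℤ)
    (hkω : |∑ i, (k i : ℝ) * ω i| ≥ γ / K ^ τ)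
    (n m : ℤ) (hn : n ≠ 0) (hm : m ≠ 0) (hnm : (|n - m| : ℝ) ≤ K)
    (hlarge : ((min |n| |m| : ℤ) : ℝ) ^ (1 - α) ≥ 4 * K ^ (τ + 1) / γ)
    (Ωtn Ωtm : ℝ) (hΩtn : |Ωtn| ≤ γ / (8 * K ^ τ)) (hΩtm : |Ωtm| ≤ γ / (8 * K ^ τ)) :
    |(∑ i, (k i : ℝ) * ω i) + (((|n| : ℝ) ^ α + lam + Ωtn) - ((|m| : ℝ) ^ α + lam + Ωtm))|
        ≥ γ / (2 * K ^ τ) ∧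
    |(∑ i, (k i : ℝ) * ω i) - (((|n| : ℝ) ^ α + lam + Ωtn) - ((|m| : ℝ) ^ α + lam + Ωtm))|
        ≥ γ / (2 * K ^ τ) := by
  set S := ∑ i, (k i : ℝ) * ω i with hS
  set a : ℝ := ((min |n| |m| : ℤ) : ℝ) with ha
  have hn1 : (1:ℤ) ≤ |n| := Int.one_le_abs hn
  have hm1 : (1:ℤ) ≤ |m| := Int.one_le_abs hm
  have ha1 : (1:ℝ) ≤ a := by
    rw [ha]; exact_mod_cast le_min hn1 hm1
  have ha0 : (0:ℝ) < a := lt_of_lt_of_le one_pos ha1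
  have hK0 : (0:ℝ) < K := lt_of_lt_of_le one_pos hK
  have hKτ : (0:ℝ) < K ^ τ := rpow_pos_of_pos hK0 _
  have hKτ1 : (0:ℝ) < K ^ (τ + 1) := rpow_pos_of_pos hK0 _
  -- difference of absolute values ≤ K
  have hdiffabs : |((|n|:ℤ):ℝ) - ((|m|:ℤ):ℝ)| ≤ K := by
    have : |(|n| - |m| : ℤ)| ≤ |n - m| := abs_abs_sub_abs_le_abs_sub n m
    have h2 : ((|(|n| - |m| : ℤ)| : ℤ) : ℝ) ≤ ((|n - m| : ℤ) : ℝ) := by exact_mod_cast this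
    calc |((|n|:ℤ):ℝ) - ((|m|:ℤ):ℝ)| = ((|(|n| - |m| : ℤ)| : ℤ) : ℝ) := by
          rw [← Int.cast_sub, ← Int.cast_abs]
      _ ≤ ((|n - m| : ℤ) : ℝ) := h2
      _ ≤ K := by exact_mod_cast hnm
  -- key bound on |A^α - B^α|
  have key : ∀ A B : ℝ, 1 ≤ A → 1 ≤ B → min A B = a → |A - B| ≤ K →
      |A ^ α - B ^ α| ≤ K * a ^ (α - 1) := by
    have haα : (0:ℝ) ≤ a ^ (α - 1) := rpow_nonneg ha0.le _
    have main : ∀ A B : ℝ, 1 ≤ A → A ≤ B → A = a → |A - B| ≤ K →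
        |A ^ α - B ^ α| ≤ K * a ^ (α - 1) := by
      intro A B hA h hAa hAB
      have h1 : B ^ α - A ^ α ≤ (B - A) * A ^ (α - 1) :=
        rpow_sub_rpow_le_aux hα0 hα1 hA h
      have h2 : A ^ α ≤ B ^ α := Real.rpow_le_rpow (by linarith) h hα0.le
      have hBA : B - A ≤ K := by
        have := abs_sub_comm A B ▸ hAB
        rw [abs_of_nonneg (by linarith)] at this; exact this
      rw [abs_sub_comm, abs_of_nonneg (by linarith)]
      calc B ^ α - A ^ α ≤ (B - A) * A ^ (α - 1) := h1
        _ ≤ K * a ^ (α - 1) := by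
            rw [hAa] at *
            exact mul_le_mul_of_nonneg_right hBA haα
    intro A B hA hB hmin hAB
    rcases le_total A B with h | h
    · exact main A B hA h (by rw [← hmin, min_eq_left h]) hAB
    · rw [abs_sub_comm]
      exact main B A hB h (by rw [← hmin, min_eq_right h]) (abs_sub_comm A B ▸ hAB)
  have hKey : |((|n|:ℤ):ℝ) ^ α - ((|m|:ℤ):ℝ) ^ α| ≤ K * a ^ (α - 1) := by
    rcases le_total (|n|:ℤ) (|m|:ℤ) with h | h
    · exact key _ _ (by exact_mod_cast hn1) (by exact_mod_cast hm1)
        (by rw [min_eq_left (by exact_mod_cast h : ((|n|:ℤ):ℝ) ≤ _), ha]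
            congr 1; exact (min_eq_left h).symm) hdiffabs
    · exact key _ _ (by exact_mod_cast hn1) (by exact_mod_cast hm1)
        (by rw [min_eq_right (by exact_mod_cast h : ((|m|:ℤ):ℝ) ≤ _), ha]
            congr 1; exact (min_eq_right h).symm) hdiffabs
  -- a^(α-1) ≤ γ / (4 K^(τ+1))
  have hainv : a ^ (α - 1) ≤ γ / (4 * K ^ (τ + 1)) := by
    have h1 : a ^ (α - 1) = (a ^ (1 - α))⁻¹ := by
      rw [← Real.rpow_neg ha0.le]; ring_nf
    have h2 : (4 * K ^ (τ + 1) / γ) ≤ a ^ (1 - α) := hlarge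
    have h3 : (0:ℝ) < 4 * K ^ (τ + 1) / γ := by positivity
    rw [h1]
    rw [inv_le_comm₀ (lt_of_lt_of_le h3 h2) (by positivity)] at *
    calc (γ / (4 * K ^ (τ + 1)))⁻¹ = 4 * K ^ (τ + 1) / γ := by
          rw [inv_div]
      _ ≤ a ^ (1 - α) := h2
  have hKa : K * a ^ (α - 1) ≤ γ / (4 * K ^ τ) := by
    have : K * (γ / (4 * K ^ (τ + 1))) = γ / (4 * K ^ τ) := by
      rw [Real.rpow_add hK0, Real.rpow_one]; field_simp
    calc K * a ^ (α - 1) ≤ K * (γ / (4 * K ^ (τ + 1))) :=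
          mul_le_mul_of_nonneg_left hainv hK0.le
      _ = γ / (4 * K ^ τ) := this
  set Δ := (((|n| : ℝ) ^ α + lam + Ωtn) - (((|m| : ℝ)) ^ α + lam + Ωtm)) with hΔ
  have hΔbound : |Δ| ≤ γ / (2 * K ^ τ) := by
    have h1 : |Δ| ≤ |((|n|:ℝ)) ^ α - ((|m|:ℝ)) ^ α| + |Ωtn| + |Ωtm| := by
      rw [hΔ]
      calc |((|n| : ℝ) ^ α + lam + Ωtn) - (((|m| : ℝ)) ^ α + lam + Ωtm)|
          = |(((|n|:ℝ)) ^ α - ((|m|:ℝ)) ^ α) + Ωtn + (-Ωtm)| := by ring_nf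
        _ ≤ |(((|n|:ℝ)) ^ α - ((|m|:ℝ)) ^ α) + Ωtn| + |(-Ωtm)| := abs_add_le _ _
        _ ≤ |((|n|:ℝ)) ^ α - ((|m|:ℝ)) ^ α| + |Ωtn| + |(-Ωtm)| := by
            have := abs_add_le (((|n|:ℝ)) ^ α - ((|m|:ℝ)) ^ α) Ωtn; linarith
        _ = |((|n|:ℝ)) ^ α - ((|m|:ℝ)) ^ α| + |Ωtn| + |Ωtm| := by rw [abs_neg]
    have h2 : |((|n|:ℝ)) ^ α - ((|m|:ℝ)) ^ α| ≤ γ / (4 * K ^ τ) := by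
      have : ((|n|:ℤ):ℝ) = (|n|:ℝ) := by push_cast; ring
      have h' : ((|m|:ℤ):ℝ) = (|m|:ℝ) := by push_cast; ring
      calc |((|n|:ℝ)) ^ α - ((|m|:ℝ)) ^ α| = |((|n|:ℤ):ℝ) ^ α - ((|m|:ℤ):ℝ) ^ α| := by
            rw [this, h']
        _ ≤ K * a ^ (α - 1) := hKey
        _ ≤ γ / (4 * K ^ τ) := hKa
    have : γ / (4 * K ^ τ) + γ / (8 * K ^ τ) + γ / (8 * K ^ τ) = γ / (2 * K ^ τ) := by
      field_simp; ring
    linarith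
  have hhalf : γ / K ^ τ - γ / (2 * K ^ τ) = γ / (2 * K ^ τ) := by field_simp; ring
  constructor
  · calc |S + Δ| ≥ |S| - |Δ| := by
          have := abs_sub_abs_le_abs_sub S (-Δ)
          simp only [abs_neg, sub_neg_eq_add] at this; linarith
      _ ≥ γ / K ^ τ - γ / (2 * K ^ τ) := by linarith [hkω]
      _ = γ / (2 * K ^ τ) := hhalf
  · calc |S - Δ| ≥ |S| - |Δ| := abs_sub_abs_le_abs_sub S Δ
      _ ≥ γ / K ^ τ - γ / (2 * K ^ τ) := by linarith [hkω]
      _ = γ / (2 * K ^ τ) := hhalf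
end

section
/- Let 0 < α < 1, β > 0 and ρ ≥ 0 be real numbers with α + β ≥ 1, and let n, m, k be nonzero integers with |n| ≠ |k|. Then (e^{−|m−k|ρ}/(|m|^β·|k|^β)) · (e^{−|n−k|ρ}/(|n|^β·|k|^β·| |n|^α − |k|^α |)) ≤ (2/α) · (e^{−|n−m|ρ}/(|n|^β·|m|^β)) · |k|^{−(2β+α−1)}. -/
open Real

private lemma bern_key (α : ℝ) (hα0 : 0 < α) (hα1 : α < 1) {x y : ℝ} (hx : 0 < x)
    (hxy : x ≤ y) : α * y ^ (α - 1) * (y - x) ≤ y ^ α - x ^ α := by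
  have hy : 0 < y := hx.trans_le hxy
  have hs : (-1 : ℝ) ≤ x / y - 1 := by
    have : 0 < x / y := div_pos hx hy
    linarith
  have hb : (1 + (x / y - 1)) ^ α ≤ 1 + α * (x / y - 1) :=
    rpow_one_add_le_one_add_mul_self hs hα0.le hα1.le
  rw [add_sub_cancel] at hb
  have hdiv : (x / y) ^ α = x ^ α / y ^ α := Real.div_rpow hx.le hy.le α
  rw [hdiv] at hb
  have hyα : 0 < y ^ α := Real.rpow_pos_of_pos hy α
  have hb' : x ^ α ≤ (1 + α * (x / y - 1)) * y ^ α := by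
    rw [div_le_iff₀ hyα] at hb; exact hb
  have hyam : y ^ (α - 1) = y ^ α / y := by
    rw [Real.rpow_sub hy, Real.rpow_one]
  rw [hyam]
  have : α * (y ^ α / y) * (y - x) = (α * (1 - x / y)) * y ^ α := by
    field_simp
  rw [this]
  nlinarith [hb']

private lemma abs_diff_key (α : ℝ) (hα0 : 0 < α) (hα1 : α < 1) {A C : ℝ} (hA : 1 ≤ A)
    (hC : 1 ≤ C) (hd : 1 ≤ |A - C|) : α / 2 * C ^ (α - 1) ≤ |A ^ α - C ^ α| := by
  have hA0 : (0 : ℝ) < A := lt_of_lt_of_le one_pos hA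
  have hC0 : (0 : ℝ) < C := lt_of_lt_of_le one_pos hC
  have hne : A ≠ C := by
    intro h; rw [h, sub_self, abs_zero] at hd; linarith
  rcases lt_or_gt_of_ne hne with h | h
  -- A < C
  · have h1 : 1 ≤ C - A := by rw [abs_sub_comm, abs_of_pos (by linarith)] at hd; linarith
    have hkey := bern_key α hα0 hα1 hA0 (le_of_lt h)
    have h2 : α / 2 * C ^ (α - 1) ≤ α * C ^ (α - 1) * (C - A) := by
      have hc1 : 0 < C ^ (α - 1) := Real.rpow_pos_of_pos hC0 _
      have h3 : α * C ^ (α - 1) * 1 ≤ α * C ^ (α - 1) * (C - A) :=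
        mul_le_mul_of_nonneg_left h1 (le_of_lt (mul_pos hα0 hc1))
      nlinarith
    have : α / 2 * C ^ (α - 1) ≤ C ^ α - A ^ α := le_trans h2 hkey
    calc α / 2 * C ^ (α - 1) ≤ C ^ α - A ^ α := this
      _ ≤ |A ^ α - C ^ α| := by rw [abs_sub_comm]; exact le_abs_self _
  -- C < A
  · have h1 : 1 ≤ A - C := by rw [abs_of_pos (by linarith)] at hd; linarith
    have hkey := bern_key α hα0 hα1 hC0 (le_of_lt h)
    -- need α/2 * C^(α-1) ≤ α * A^(α-1) * (A - C)
    have hAC : A / C ≤ 2 * (A - C) := by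
      rw [div_le_iff₀ hC0]; nlinarith
    have hACpow : (A / C) ^ (1 - α) ≤ A / C := by
      have h1AC : 1 ≤ A / C := (one_le_div hC0).mpr h.le
      calc (A / C) ^ (1 - α) ≤ (A / C) ^ (1 : ℝ) :=
            Real.rpow_le_rpow_of_exponent_le h1AC (by linarith)
        _ = A / C := Real.rpow_one _
    have hmain : C ^ (α - 1) ≤ 2 * (A ^ (α - 1) * (A - C)) := by
      have hApow : 0 < A ^ (α - 1) := Real.rpow_pos_of_pos hA0 _
      have hCpow : 0 < C ^ (α - 1) := Real.rpow_pos_of_pos hC0 _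
      have hrw : C ^ (α - 1) / A ^ (α - 1) = (A / C) ^ (1 - α) := by
        rw [show (1 : ℝ) - α = -(α - 1) by ring, Real.rpow_neg (div_pos hA0 hC0).le,
          Real.div_rpow hA0.le hC0.le, inv_div]
      have : C ^ (α - 1) / A ^ (α - 1) ≤ 2 * (A - C) := hrw ▸ le_trans hACpow hAC
      rw [div_le_iff₀ hApow] at this
      calc C ^ (α - 1) ≤ 2 * (A - C) * A ^ (α - 1) := this
        _ = 2 * (A ^ (α - 1) * (A - C)) := by ring
    have h2 : α / 2 * C ^ (α - 1) ≤ α * A ^ (α - 1) * (A - C) := by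
      have := mul_le_mul_of_nonneg_left hmain (le_of_lt hα0)
      nlinarith
    calc α / 2 * C ^ (α - 1) ≤ A ^ α - C ^ α := le_trans h2 hkey
      _ ≤ |A ^ α - C ^ α| := le_abs_self _

theorem stmt_5 (α β ρ : ℝ) (hα0 : 0 < α) (hα1 : α < 1) (hβ : 0 < β) (hρ : 0 ≤ ρ)
    (hαβ : 1 ≤ α + β) (n m k : ℤ) (hn : n ≠ 0) (hm : m ≠ 0) (hk : k ≠ 0)
    (hnk : |n| ≠ |k|) :
    (Real.exp (-(|m - k| : ℝ) * ρ) / ((|m| : ℝ) ^ β * (|k| : ℝ) ^ β)) *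
      (Real.exp (-(|n - k| : ℝ) * ρ) /
        ((|n| : ℝ) ^ β * (|k| : ℝ) ^ β * |(|n| : ℝ) ^ α - (|k| : ℝ) ^ α|))
    ≤ (2 / α) * (Real.exp (-(|n - m| : ℝ) * ρ) / ((|n| : ℝ) ^ β * (|m| : ℝ) ^ β)) *
        (|k| : ℝ) ^ (-(2 * β + α - 1)) := by
  set A : ℝ := (|n| : ℝ) with hAdef
  set B : ℝ := (|m| : ℝ) with hBdef
  set C : ℝ := (|k| : ℝ) with hCdef
  have hA1 : 1 ≤ A := by
    rw [hAdef, ← Int.cast_abs]; exact_mod_cast Int.one_le_abs hn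
  have hB1 : 1 ≤ B := by
    rw [hBdef, ← Int.cast_abs]; exact_mod_cast Int.one_le_abs hm
  have hC1 : 1 ≤ C := by
    rw [hCdef, ← Int.cast_abs]; exact_mod_cast Int.one_le_abs hk
  have hA0 : (0:ℝ) < A := lt_of_lt_of_le one_pos hA1
  have hB0 : (0:ℝ) < B := lt_of_lt_of_le one_pos hB1
  have hC0 : (0:ℝ) < C := lt_of_lt_of_le one_pos hC1
  have hd : 1 ≤ |A - C| := by
    have h1 : |n| ≠ |k| := hnk
    have h2 : 1 ≤ |(|n| - |k|)| := Int.one_le_abs (sub_ne_zero.mpr h1)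
    have : ((|(|n| - |k|)| : ℤ) : ℝ) = |A - C| := by push_cast [hAdef, hCdef]; rfl
    rw [← this]; exact_mod_cast h2
  have hD := abs_diff_key α hα0 hα1 hA1 hC1 hd
  set D : ℝ := |A ^ α - C ^ α| with hDdef
  have hD0 : 0 < D := lt_of_lt_of_le (by positivity) hD
  -- exponential part
  have hexp : Real.exp (-(|m - k| : ℝ) * ρ) * Real.exp (-(|n - k| : ℝ) * ρ)
      ≤ Real.exp (-(|n - m| : ℝ) * ρ) := by
    rw [← Real.exp_add, Real.exp_le_exp]
    have htri : (|n - m| : ℝ) ≤ (|n - k| : ℝ) + (|m - k| : ℝ) := by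
      have : |n - m| ≤ |n - k| + |m - k| := by
        calc |n - m| = |(n - k) - (m - k)| := by ring_nf
          _ ≤ |n - k| + |m - k| := abs_sub _ _
      exact_mod_cast this
    nlinarith
  -- power part positivity
  have hAβ : 0 < A ^ β := Real.rpow_pos_of_pos hA0 β
  have hBβ : 0 < B ^ β := Real.rpow_pos_of_pos hB0 β
  have hCβ : 0 < C ^ β := Real.rpow_pos_of_pos hC0 β
  have hCs : 0 < C ^ (2 * β + α - 1) := Real.rpow_pos_of_pos hC0 _
  -- denominator estimate
  have hden : α / 2 * (A ^ β * B ^ β * C ^ (2 * β + α - 1)) ≤ A ^ β * B ^ β * (C ^ β * C ^ β * D) := by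
    have hCC : C ^ β * C ^ β * (α / 2 * C ^ (α - 1)) = α / 2 * C ^ (2 * β + α - 1) := by
      rw [show (2:ℝ) * β + α - 1 = β + (β + (α - 1)) by ring,
        Real.rpow_add hC0, Real.rpow_add hC0]
      ring
    have : α / 2 * C ^ (2 * β + α - 1) ≤ C ^ β * C ^ β * D := by
      rw [← hCC]
      have := mul_le_mul_of_nonneg_left hD (le_of_lt (mul_pos hCβ hCβ))
      linarith
    nlinarith [mul_pos hAβ hBβ]
  have hlhs : (Real.exp (-(|m - k| : ℝ) * ρ) / (B ^ β * C ^ β)) *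
      (Real.exp (-(|n - k| : ℝ) * ρ) / (A ^ β * C ^ β * D))
      = (Real.exp (-(|m - k| : ℝ) * ρ) * Real.exp (-(|n - k| : ℝ) * ρ)) /
        (A ^ β * B ^ β * (C ^ β * C ^ β * D)) := by
    field_simp
  have hrhs : (2 / α) * (Real.exp (-(|n - m| : ℝ) * ρ) / (A ^ β * B ^ β)) *
      C ^ (-(2 * β + α - 1))
      = Real.exp (-(|n - m| : ℝ) * ρ) / (α / 2 * (A ^ β * B ^ β * C ^ (2 * β + α - 1))) := by
    rw [Real.rpow_neg hC0.le]
    field_simp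
  rw [hlhs, hrhs]
  apply div_le_div₀ (Real.exp_pos _).le hexp (by positivity) hden
end

section
/- Let d ≥ 1 be an integer and ρ, M, δ > 0 real numbers. Let O ⊆ ℝ^d be Lebesgue measurable and let ω : O → ℝ^d satisfy ‖ω(ξ)‖ ≤ ρ for all ξ ∈ O and ‖ξ − η‖ ≤ M·‖ω(ξ) − ω(η)‖ for all ξ, η ∈ O. Then there is a constant C depending only on d such that for every nonzero k ∈ ℤ^d, meas({ξ ∈ O : |⟨k, ω(ξ)⟩| ≤ δ}) ≤ C·M^d·ρ^{d−1}·δ/‖k‖. -/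
/-!
The resonance set `S` is mapped by `ω` into the slab `{y | ‖y‖ ≤ ρ, |⟪k, y⟫| ≤ δ}`. In an
orthonormal frame whose first vector is `k / ‖k‖` this slab lies in a box of volume
`(2δ/‖k‖)·(2ρ)^(d-1)`. Since `ω` has an `M`-Lipschitz inverse on `S`, comparing Lebesgue measure
with `d`-dimensional Hausdorff measure gives `meas S ≤ M^d · meas (ω '' S)`, so `C = 2^d` works.
-/

open MeasureTheory RealInnerProductSpace ENNReal NNReal Module

section Haar

variable {E : Type*} [NormedAddCommGroup E] [NormedSpace ℝ E] [FiniteDimensional ℝ E]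
  [MeasurableSpace E] [BorelSpace E] (μ : Measure E) [μ.IsAddHaarMeasure]

theorem LipschitzOnWith.addHaar_image_le {f : E → E} {K : ℝ≥0} {s : Set E}
    (hf : LipschitzOnWith K f s) : μ (f '' s) ≤ (K : ℝ≥0∞) ^ finrank ℝ E * μ s := by
  have hμ : μ = Measure.addHaarScalarFactor μ μH[finrank ℝ E] • μH[finrank ℝ E] :=
    Measure.isAddLeftInvariant_eq_smul _ _
  rw [hμ, Measure.coe_nnreal_smul_apply, Measure.coe_nnreal_smul_apply, mul_left_comm,
    ← ENNReal.rpow_natCast]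
  gcongr
  exact hf.hausdorffMeasure_image_le (Nat.cast_nonneg _)

theorem addHaar_le_mul_addHaar_image_of_norm_sub_le {ω : E → E} {M : ℝ} {s : Set E}
    (hω : ∀ ξ ∈ s, ∀ η ∈ s, ‖ξ - η‖ ≤ M * ‖ω ξ - ω η‖) :
    μ s ≤ ENNReal.ofReal M ^ finrank ℝ E * μ (ω '' s) := by
  have hinj : s.InjOn ω := fun ξ hξ η hη h => by
    simpa [h, sub_eq_zero] using hω ξ hξ η hη
  have hlip : LipschitzOnWith M.toNNReal (Function.invFunOn ω s) (ω '' s) := by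
    refine LipschitzOnWith.of_dist_le_mul ?_
    rintro _ ⟨ξ, hξ, rfl⟩ _ ⟨η, hη, rfl⟩
    rw [hinj.leftInvOn_invFunOn hξ, hinj.leftInvOn_invFunOn hη, dist_eq_norm, dist_eq_norm]
    exact (hω ξ hξ η hη).trans (by gcongr; exact Real.le_coe_toNNReal M)
  calc μ s = μ (Function.invFunOn ω s '' (ω '' s)) := by
        rw [hinj.leftInvOn_invFunOn.image_image]
    _ ≤ _ := hlip.addHaar_image_le μ

end Haar

section Slab

variable {E : Type*} [NormedAddCommGroup E] [InnerProductSpace ℝ E] [FiniteDimensional ℝ E]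
  [MeasurableSpace E] [BorelSpace E]

theorem OrthonormalBasis.volume_setOf_forall_abs_inner_le {ι : Type*} [Fintype ι]
    (b : OrthonormalBasis ι ℝ E) (r : ι → ℝ) :
    volume {y : E | ∀ i, |⟪b i, y⟫| ≤ r i} = ∏ i, ENNReal.ofReal (2 * r i) := by
  have hbox : {y : E | ∀ i, |⟪b i, y⟫| ≤ r i} =
      WithLp.ofLp ∘ b.repr ⁻¹' Set.univ.pi fun i => Set.Icc (-r i) (r i) := by
    ext y
    simp only [Set.mem_ofPred_eq, Set.mem_preimage, Set.mem_univ_pi, Set.mem_Icc, abs_le,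
      Function.comp_apply, b.repr_apply_apply]
  rw [hbox, ((PiLp.volume_preserving_ofLp ι).comp b.measurePreserving_repr).measure_preimage
    (MeasurableSet.univ_pi fun _ => measurableSet_Icc).nullMeasurableSet, volume_pi_pi]
  simp [Real.volume_Icc, two_mul]

theorem volume_setOf_norm_le_and_abs_inner_le {v : E} (hv : v ≠ 0) {ρ : ℝ} (hρ : 0 ≤ ρ) (δ : ℝ) :
    volume {y : E | ‖y‖ ≤ ρ ∧ |⟪v, y⟫| ≤ δ} ≤
      ENNReal.ofReal (2 ^ finrank ℝ E * ρ ^ (finrank ℝ E - 1) * δ / ‖v‖) := by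
  have : Nontrivial E := ⟨⟨v, 0, hv⟩⟩
  obtain ⟨m, hm⟩ := Nat.exists_eq_add_one_of_ne_zero (finrank_pos (R := ℝ) (M := E)).ne'
  have hu : Orthonormal ℝ (Set.domRestrict {0} fun _ : Fin (m + 1) => ‖v‖⁻¹ • v) := by
    refine ⟨fun _ => by simp [Set.domRestrict, norm_smul, hv], fun i j hij => ?_⟩
    exact absurd (Subtype.ext (i.2.trans j.2.symm)) hij
  obtain ⟨b, hb⟩ := hu.exists_orthonormalBasis_extension_of_card_eq (by simp [hm])
  have hslab : {y : E | ‖y‖ ≤ ρ ∧ |⟪v, y⟫| ≤ δ} ⊆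
      {y | ∀ i, |⟪b i, y⟫| ≤ (Fin.cons (δ / ‖v‖) fun _ => ρ : Fin (m + 1) → ℝ) i} := by
    rintro y ⟨hyρ, hyδ⟩ i
    refine Fin.cases ?_ (fun i => ?_) i
    · rw [Fin.cons_zero, hb 0 rfl, real_inner_smul_left, abs_mul, abs_inv, abs_norm,
        div_eq_inv_mul]
      gcongr
    · rw [Fin.cons_succ]
      calc |⟪b i.succ, y⟫| ≤ ‖b i.succ‖ * ‖y‖ := abs_real_inner_le_norm _ _
        _ ≤ ρ := by simpa using hyρ
  calc volume {y : E | ‖y‖ ≤ ρ ∧ |⟪v, y⟫| ≤ δ}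
      ≤ ∏ i, ENNReal.ofReal (2 * (Fin.cons (δ / ‖v‖) fun _ => ρ : Fin (m + 1) → ℝ) i) := by
        rw [← b.volume_setOf_forall_abs_inner_le]
        exact measure_mono hslab
    _ = ENNReal.ofReal (2 * (δ / ‖v‖)) * ENNReal.ofReal (2 * ρ) ^ m := by
        simp [Fin.prod_univ_succ]
    _ = ENNReal.ofReal (2 ^ finrank ℝ E * ρ ^ (finrank ℝ E - 1) * δ / ‖v‖) := by
        rw [← ENNReal.ofReal_pow (by positivity), mul_comm, ← ENNReal.ofReal_mul (by positivity),
          hm, Nat.add_sub_cancel]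
        congr 1
        ring

end Slab

theorem stmt_8_general (d : ℕ) :
    ∃ C : ℝ, 0 < C ∧
      ∀ (ρ M δ : ℝ), 0 < ρ → 0 < M → 0 < δ →
      ∀ (O : Set (EuclideanSpace ℝ (Fin d))), MeasurableSet O →
      ∀ ω : EuclideanSpace ℝ (Fin d) → EuclideanSpace ℝ (Fin d),
        (∀ ξ ∈ O, ‖ω ξ‖ ≤ ρ) →
        (∀ ξ ∈ O, ∀ η ∈ O, ‖ξ - η‖ ≤ M * ‖ω ξ - ω η‖) →
        ∀ k : Fin d → ℤ, k ≠ 0 →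
          volume {ξ ∈ O | |∑ i, (k i : ℝ) * ω ξ i| ≤ δ} ≤
            ENNReal.ofReal
              (C * M ^ d * ρ ^ (d - 1) * δ /
                ‖(EuclideanSpace.equiv (Fin d) ℝ).symm (fun i => (k i : ℝ))‖) := by
  refine ⟨2 ^ d, by positivity, fun ρ M δ hρ hM _ O _ ω hωρ hωM k hk => ?_⟩
  set v := (EuclideanSpace.equiv (Fin d) ℝ).symm (fun i => (k i : ℝ))
  have hv : v ≠ 0 := fun h => hk (funext fun i => by simpa [v] using congr($h i))
  have hinner (y : EuclideanSpace ℝ (Fin d)) : ⟪v, y⟫ = ∑ i, (k i : ℝ) * y i := by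
    simp [v, PiLp.inner_apply, mul_comm]
  set S := {ξ ∈ O | |∑ i, (k i : ℝ) * ω ξ i| ≤ δ}
  have hωS : ω '' S ⊆ {y | ‖y‖ ≤ ρ ∧ |⟪v, y⟫| ≤ δ} := by
    rintro _ ⟨ξ, ⟨hξO, hξδ⟩, rfl⟩
    exact ⟨hωρ ξ hξO, by rwa [hinner]⟩
  calc volume S ≤ ENNReal.ofReal M ^ d * volume (ω '' S) := by
        simpa only [finrank_euclideanSpace_fin] using
          addHaar_le_mul_addHaar_image_of_norm_sub_le volume fun ξ hξ η hη => hωM ξ hξ.1 η hη.1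
    _ ≤ ENNReal.ofReal M ^ d * ENNReal.ofReal (2 ^ d * ρ ^ (d - 1) * δ / ‖v‖) := by
        grw [measure_mono hωS, volume_setOf_norm_le_and_abs_inner_le hv hρ.le δ,
          finrank_euclideanSpace_fin]
    _ = ENNReal.ofReal (2 ^ d * M ^ d * ρ ^ (d - 1) * δ / ‖v‖) := by
        rw [← ENNReal.ofReal_pow hM.le, ← ENNReal.ofReal_mul (by positivity)]
        congr 1
        ring

theorem stmt_8 (d : ℕ) (hd : 1 ≤ d) :
    ∃ C : ℝ, 0 < C ∧
      ∀ (ρ M δ : ℝ), 0 < ρ → 0 < M → 0 < δ →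
      ∀ (O : Set (EuclideanSpace ℝ (Fin d))), MeasurableSet O →
      ∀ ω : EuclideanSpace ℝ (Fin d) → EuclideanSpace ℝ (Fin d),
        (∀ ξ ∈ O, ‖ω ξ‖ ≤ ρ) →
        (∀ ξ ∈ O, ∀ η ∈ O, ‖ξ - η‖ ≤ M * ‖ω ξ - ω η‖) →
        ∀ k : Fin d → ℤ, k ≠ 0 →
          volume {ξ ∈ O | |∑ i, (k i : ℝ) * ω ξ i| ≤ δ} ≤
            ENNReal.ofReal
              (C * M ^ d * ρ ^ (d - 1) * δ /
                ‖(EuclideanSpace.equiv (Fin d) ℝ).symm (fun i => (k i : ℝ))‖) :=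
  stmt_8_general d
end

section
/- Let d ≥ 1 be an integer and ρ, M, γ > 0, K ≥ 1, τ₁ > 0 real numbers. Let O ⊆ ℝ^d be Lebesgue measurable and let ω : O → ℝ^d satisfy ‖ω(ξ)‖ ≤ ρ for all ξ ∈ O and ‖ξ − η‖ ≤ M·‖ω(ξ) − ω(η)‖ for all ξ, η ∈ O. Then there is a constant C depending only on d, M and ρ such that meas(⋃_{k ∈ ℤ^d, 0 < ‖k‖_∞ ≤ K} {ξ ∈ O : |⟨k, ω(ξ)⟩| ≤ γ·K^{−τ₁}}) ≤ C·γ·K^{d−τ₁}. -/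
/-!
Each resonance set lies in the image, under the `M`-Lipschitz inverse of `ω`, of a slab
`|⟨k, y⟩| ≤ α` cut down to the cube `[-ρ, ρ]^d`. Since `k` is a nonzero integer vector, some
`|k i₀| ≥ 1`, and the shear replacing `y i₀` by `⟨k, y⟩`, of determinant `k i₀`, maps that slab
into a box of volume `2α (2ρ)^(d-1)`. So each resonance set has volume at most
`M^d · 2α (2ρ)^(d-1)`, and there are at most `(3K)^d` vectors `k` with `‖k‖_∞ ≤ K`.
-/

open MeasureTheory Module
open scoped NNReal ENNReal

section InnerProductSpace

variable {V : Type*} [NormedAddCommGroup V] [InnerProductSpace ℝ V] [FiniteDimensional ℝ V]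
  [MeasurableSpace V] [BorelSpace V]

theorem LipschitzOnWith.volume_image_le {f : V → V} {s : Set V} {K : ℝ≥0}
    (hf : LipschitzOnWith K f s) : volume (f '' s) ≤ K ^ finrank ℝ V * volume s := by
  rw [← InnerProductSpace.euclideanHausdorffMeasure_eq_volume,
    Measure.euclideanHausdorffMeasure_def, Measure.smul_apply, Measure.smul_apply,
    ENNReal.smul_def, ENNReal.smul_def, smul_eq_mul, smul_eq_mul, ← ENNReal.rpow_natCast,
    mul_left_comm]
  exact mul_le_mul_right (hf.hausdorffMeasure_image_le (Nat.cast_nonneg _)) _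

theorem volume_le_mul_volume_image_of_dist_le {f : V → V} {s : Set V} {M : ℝ≥0}
    (hf : ∀ x ∈ s, ∀ y ∈ s, dist x y ≤ M * dist (f x) (f y)) :
    volume s ≤ M ^ finrank ℝ V * volume (f '' s) := by
  have hinj : s.InjOn f := fun x hx y hy hxy => by
    simpa [hxy] using hf x hx y hy
  have hinv := hinj.leftInvOn_invFunOn
  have hlip : LipschitzOnWith M (Function.invFunOn f s) (f '' s) := by
    refine LipschitzOnWith.of_dist_le_mul ?_
    rintro _ ⟨x, hx, rfl⟩ _ ⟨y, hy, rfl⟩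
    rw [hinv hx, hinv hy]
    exact hf x hx y hy
  simpa only [hinv.image_image] using hlip.volume_image_le

end InnerProductSpace

theorem Matrix.det_updateRow_one {ι R : Type*} [Fintype ι] [DecidableEq ι] [CommRing R]
    (i : ι) (v : ι → R) : ((1 : Matrix ι ι R).updateRow i v).det = v i := by
  have hv : ∑ j, v j • (1 : Matrix ι ι R) j = v := by
    ext j
    simp [Matrix.one_apply]
  simpa [hv] using Matrix.det_updateRow_sum (1 : Matrix ι ι R) i v

theorem volume_pi_update_Icc {ι : Type*} [Fintype ι] [DecidableEq ι] (i₀ : ι) (a b : ℝ) {ρ : ℝ}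
    (hρ : 0 ≤ ρ) :
    volume (Set.univ.pi (Function.update (fun _ => Set.Icc (-ρ) ρ) i₀ (Set.Icc a b))) =
      ENNReal.ofReal ((b - a) * (2 * ρ) ^ (Fintype.card ι - 1)) := by
  rw [volume_pi_pi, ← Function.comp_def (volume : Measure ℝ), Function.comp_update,
    Finset.prod_update_of_mem (Finset.mem_univ i₀)]
  simp only [Function.comp_apply, Finset.prod_const, Real.volume_Icc,
    ← Finset.compl_eq_univ_sdiff, Finset.card_compl, Finset.card_singleton]
  rw [← ENNReal.ofReal_pow (by linarith), ← ENNReal.ofReal_mul' (pow_nonneg (by linarith) _)]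
  ring_nf

theorem volume_box_inter_slab_le {ι : Type*} [Fintype ι] (k : ι → ℝ) {i₀ : ι} (hk : k i₀ ≠ 0)
    {ρ : ℝ} (hρ : 0 ≤ ρ) (α : ℝ) :
    volume {y : ι → ℝ | (∀ i, |y i| ≤ ρ) ∧ |∑ i, k i * y i| ≤ α} ≤
      ENNReal.ofReal (2 * α * (2 * ρ) ^ (Fintype.card ι - 1) / |k i₀|) := by
  classical
  set L := Matrix.toLin' ((1 : Matrix ι ι ℝ).updateRow i₀ k)
  have hdet : LinearMap.det L = k i₀ := by
    rw [LinearMap.det_toLin', Matrix.det_updateRow_one]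
  have hL : ∀ y, L y = Function.update y i₀ (∑ i, k i * y i) := fun y => by
    simp [L, Matrix.updateRow_mulVec, dotProduct]
  set B := Set.univ.pi (Function.update (fun _ => Set.Icc (-ρ) ρ) i₀ (Set.Icc (-α) α))
  have hsub : {y : ι → ℝ | (∀ i, |y i| ≤ ρ) ∧ |∑ i, k i * y i| ≤ α} ⊆ L ⁻¹' B := by
    rintro y ⟨hbox, hslab⟩ j -
    rw [hL]
    obtain rfl | hj := eq_or_ne j i₀
    · simpa using abs_le.1 hslab
    · simpa [hj] using abs_le.1 (hbox j)
  calc _ ≤ volume (L ⁻¹' B) := measure_mono hsub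
    _ = ENNReal.ofReal |(k i₀)⁻¹| *
          ENNReal.ofReal ((α - -α) * (2 * ρ) ^ (Fintype.card ι - 1)) := by
      rw [Measure.addHaar_preimage_linearMap _ (hdet ▸ hk), hdet, volume_pi_update_Icc _ _ _ hρ]
    _ = _ := by
      rw [← ENNReal.ofReal_mul (abs_nonneg _), abs_inv]
      congr 1
      ring

theorem mem_piFinset_Icc_floor_iff {ι : Type*} [Fintype ι] [DecidableEq ι] {K : ℝ}
    {k : ι → ℤ} :
    k ∈ Fintype.piFinset (fun _ : ι => Finset.Icc (-⌊K⌋) ⌊K⌋) ↔ ∀ i, (|k i| : ℝ) ≤ K := by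
  simp only [Fintype.mem_piFinset, Finset.mem_Icc]
  refine forall_congr' fun i => ?_
  rw [← abs_le, Int.le_floor, Int.cast_abs]

theorem card_piFinset_Icc_floor_le {ι : Type*} [Fintype ι] [DecidableEq ι] {K : ℝ}
    (hK : 1 ≤ K) :
    ((Fintype.piFinset fun _ : ι => Finset.Icc (-⌊K⌋) ⌊K⌋).card : ℝ) ≤
      (3 * K) ^ Fintype.card ι := by
  have hfloor : (0 : ℤ) ≤ ⌊K⌋ := Int.floor_nonneg.2 (by linarith)
  rw [Fintype.card_piFinset, Finset.prod_const, Finset.card_univ, Int.card_Icc, Nat.cast_pow]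
  gcongr
  have := Int.floor_le K
  rw [← Int.cast_natCast, Int.toNat_of_nonneg (by omega)]
  push_cast
  linarith

def resonantSet {d : ℕ} (O : Set (EuclideanSpace ℝ (Fin d)))
    (ω : EuclideanSpace ℝ (Fin d) → EuclideanSpace ℝ (Fin d)) (k : Fin d → ℤ) (α : ℝ) :
    Set (EuclideanSpace ℝ (Fin d)) :=
  {ξ ∈ O | |∑ i, (k i : ℝ) * ω ξ i| ≤ α}

theorem volume_resonantSet_le {d : ℕ} {O : Set (EuclideanSpace ℝ (Fin d))}
    {ω : EuclideanSpace ℝ (Fin d) → EuclideanSpace ℝ (Fin d)} {ρ M α : ℝ} (hρ : 0 ≤ ρ)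
    (hM : 0 ≤ M) (hα : 0 ≤ α) (hω : ∀ ξ ∈ O, ‖ω ξ‖ ≤ ρ)
    (hlip : ∀ ξ ∈ O, ∀ η ∈ O, ‖ξ - η‖ ≤ M * ‖ω ξ - ω η‖) {k : Fin d → ℤ} (hk : k ≠ 0) :
    volume (resonantSet O ω k α) ≤ ENNReal.ofReal (M ^ d * (2 * α * (2 * ρ) ^ (d - 1))) := by
  obtain ⟨i₀, hi₀⟩ : ∃ i, k i ≠ 0 := Function.ne_iff.1 hk
  set A := resonantSet O ω k α
  set slab := {y : Fin d → ℝ | (∀ i, |y i| ≤ ρ) ∧ |∑ i, (k i : ℝ) * y i| ≤ α}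
  have hA : volume A ≤ M.toNNReal ^ d * volume (ω '' A) := by
    have hdist : ∀ ξ ∈ A, ∀ η ∈ A, dist ξ η ≤ M.toNNReal * dist (ω ξ) (ω η) :=
      fun ξ hξ η hη => by simpa [dist_eq_norm, hM] using hlip ξ hξ.1 η hη.1
    simpa using volume_le_mul_volume_image_of_dist_le hdist
  have hωA : volume (ω '' A) ≤ volume slab := calc
    volume (ω '' A) ≤ volume (WithLp.ofLp ⁻¹' slab) := measure_mono <| by
      rintro _ ⟨ξ, ⟨hξ, hres⟩, rfl⟩
      exact ⟨fun i => (PiLp.norm_apply_le (ω ξ) i).trans (hω ξ hξ), hres⟩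
    _ ≤ volume.map WithLp.ofLp slab := Measure.le_map_apply (by fun_prop) _
    _ = volume slab := by rw [(PiLp.volume_preserving_ofLp _).map_eq]
  have hslab : volume slab ≤ ENNReal.ofReal (2 * α * (2 * ρ) ^ (d - 1)) := by
    have hk₀ : (k i₀ : ℝ) ≠ 0 := Int.cast_ne_zero.2 hi₀
    refine (volume_box_inter_slab_le (fun i => (k i : ℝ)) hk₀ hρ α).trans ?_
    rw [Fintype.card_fin]
    gcongr
    refine div_le_self (by positivity) ?_
    exact_mod_cast Int.one_le_abs hi₀
  calc volume A ≤ M.toNNReal ^ d * ENNReal.ofReal (2 * α * (2 * ρ) ^ (d - 1)) := by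
        grw [hA, hωA, hslab]
    _ = _ := by
      rw [ENNReal.ofReal_mul (pow_nonneg hM d), ENNReal.ofReal_pow hM]
      rfl

theorem stmt_9_general (d : ℕ) (ρ M : ℝ) (hρ : 0 < ρ) (hM : 0 < M) :
    ∃ C : ℝ, 0 < C ∧
      ∀ (γ K τ₁ : ℝ), 0 < γ → 1 ≤ K → 0 < τ₁ →
      ∀ (O : Set (EuclideanSpace ℝ (Fin d))), MeasurableSet O →
      ∀ ω : EuclideanSpace ℝ (Fin d) → EuclideanSpace ℝ (Fin d),
        (∀ ξ ∈ O, ‖ω ξ‖ ≤ ρ) →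
        (∀ ξ ∈ O, ∀ η ∈ O, ‖ξ - η‖ ≤ M * ‖ω ξ - ω η‖) →
        volume (⋃ k ∈ {k : Fin d → ℤ | k ≠ 0 ∧ ∀ i, (|k i| : ℝ) ≤ K},
            {ξ ∈ O | |∑ i, (k i : ℝ) * ω ξ i| ≤ γ * K ^ (-τ₁)}) ≤
          ENNReal.ofReal (C * γ * K ^ ((d : ℝ) - τ₁)) := by
  classical
  refine ⟨3 ^ d * M ^ d * (2 * (2 * ρ) ^ (d - 1)), by positivity, ?_⟩
  intro γ K τ₁ hγ hK _ O _ ω hω hlip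
  have hK₀ : 0 < K := by linarith
  set b := M ^ d * (2 * (γ * K ^ (-τ₁)) * (2 * ρ) ^ (d - 1)) with hb
  set box := Fintype.piFinset fun _ : Fin d => Finset.Icc (-⌊K⌋) ⌊K⌋
  have hS : {k : Fin d → ℤ | k ≠ 0 ∧ ∀ i, (|k i| : ℝ) ≤ K} = ↑(box.erase 0) := by
    ext k
    rw [Finset.coe_erase, Set.mem_sdiff, Finset.mem_coe, mem_piFinset_Icc_floor_iff]
    exact and_comm
  have hcard : ((box.erase 0).card : ℝ) ≤ (3 * K) ^ d := by
    grw [Finset.card_erase_le]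
    simpa only [Fintype.card_fin] using card_piFinset_Icc_floor_le (ι := Fin d) hK
  rw [hS]
  calc _ ≤ ∑ k ∈ box.erase 0, volume (resonantSet O ω k (γ * K ^ (-τ₁))) :=
        measure_biUnion_finset_le _ _
    _ ≤ (box.erase 0).card • ENNReal.ofReal b :=
        Finset.sum_le_card_nsmul _ _ _ fun k hk => volume_resonantSet_le hρ.le hM.le
          (by positivity) hω hlip (Finset.ne_of_mem_erase hk)
    _ ≤ ENNReal.ofReal ((3 * K) ^ d * b) := by
        rw [nsmul_eq_mul, ← ENNReal.ofReal_natCast, ← ENNReal.ofReal_mul (by positivity)]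
        gcongr
    _ = _ := by
        rw [hb, sub_eq_add_neg, Real.rpow_add hK₀, Real.rpow_natCast]
        ring_nf

theorem stmt_9 (d : ℕ) (hd : 1 ≤ d) (ρ M : ℝ) (hρ : 0 < ρ) (hM : 0 < M) :
    ∃ C : ℝ, 0 < C ∧
      ∀ (γ K τ₁ : ℝ), 0 < γ → 1 ≤ K → 0 < τ₁ →
      ∀ (O : Set (EuclideanSpace ℝ (Fin d))), MeasurableSet O →
      ∀ ω : EuclideanSpace ℝ (Fin d) → EuclideanSpace ℝ (Fin d),
        (∀ ξ ∈ O, ‖ω ξ‖ ≤ ρ) →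
        (∀ ξ ∈ O, ∀ η ∈ O, ‖ξ - η‖ ≤ M * ‖ω ξ - ω η‖) →
        volume (⋃ k ∈ {k : Fin d → ℤ | k ≠ 0 ∧ ∀ i, (|k i| : ℝ) ≤ K},
            {ξ ∈ O | |∑ i, (k i : ℝ) * ω ξ i| ≤ γ * K ^ (-τ₁)}) ≤
          ENNReal.ofReal (C * γ * K ^ ((d : ℝ) - τ₁)) :=
  stmt_9_general d ρ M hρ hM
end
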